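/- arXiv:2309.10762 — 2 statements merged into one kernel-verified Lean document; each statement's English description precedes it below -/
import Mathlib

section
/- The contraction of a conditional oriented matroid is a conditional oriented matroid: if (E, L) is a conditional oriented matroid and A ⊆ E, then (E ∖ A, L/A), where L/A = {X restricted to E ∖ A : X ∈ L, X_e = 0 for all e ∈ A}, is a conditional oriented matroid. -/
variable {E : Type*}

/-- Composition of sign vectors: (X ∘ Y)_e = X_e if X_e ≠ 0, else Y_e. -/
def comp (X Y : E → SignType) : E → SignType := fun e => if X e = 0 then Y e else X e

/-- Sign-vector partial order: X ⪯ Y iff X_e ∈ {0, Y_e} for all e. -/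
def sle (X Y : E → SignType) : Prop := ∀ e, X e = 0 ∨ X e = Y e

/-- Face symmetry condition (FS). -/
def FS (L : Set (E → SignType)) : Prop := ∀ X ∈ L, ∀ Y ∈ L, comp X (-Y) ∈ L

/-- Composition condition (C). -/
def Comp (L : Set (E → SignType)) : Prop := ∀ X ∈ L, ∀ Y ∈ L, comp X Y ∈ L

/-- Symmetry condition (SymCond). -/
def SymCond (L : Set (E → SignType)) : Prop := ∀ X ∈ L, -X ∈ L

/-- Strong elimination condition (SE). -/
def SE (L : Set (E → SignType)) : Prop :=
  ∀ X ∈ L, ∀ Y ∈ L, ∀ e, X e = -Y e → X e ≠ 0 →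
    ∃ Z ∈ L, Z e = 0 ∧ ∀ f, ¬(X f = -Y f ∧ X f ≠ 0) → Z f = comp X Y f

/-- A tope: a maximal element of L with respect to `sle`. -/
def IsTope (L : Set (E → SignType)) (T : E → SignType) : Prop :=
  T ∈ L ∧ ∀ Z ∈ L, sle T Z → Z = T


/-- Restriction of a sign vector to the complement of A. -/
def restrict {A : Set E} (X : E → SignType) : ↥Aᶜ → SignType := fun e => X e

/-! Both axioms transfer because composition and negation commute with restriction, and a
covector vanishing on `A` is never separated from another one at a point of `A`. -/

/-- The contraction `L / A`. -/
def contraction (L : Set (E → SignType)) (A : Set E) : Set (↥Aᶜ → SignType) :=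
  {Y | ∃ X ∈ L, (∀ a ∈ A, X a = 0) ∧ Y = restrict X}

theorem comp_apply_of_eq_zero {X Y : E → SignType} {e : E} (hX : X e = 0) (hY : Y e = 0) :
    comp X Y e = 0 := by
  simp [comp, hX, hY]

theorem restrict_comp {A : Set E} (X Y : E → SignType) :
    restrict (A := A) (comp X Y) = comp (restrict X) (restrict Y) :=
  rfl

theorem restrict_neg {A : Set E} (X : E → SignType) :
    restrict (A := A) (-X) = -restrict X :=
  rfl

theorem FS.contraction {L : Set (E → SignType)} (hFS : FS L) (A : Set E) :
    FS (contraction L A) := by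
  rintro _ ⟨X, hX, hXA, rfl⟩ _ ⟨Y, hY, hYA, rfl⟩
  refine ⟨comp X (-Y), hFS X hX Y hY, fun a ha => ?_, ?_⟩
  · exact comp_apply_of_eq_zero (hXA a ha) (by simp [hYA a ha])
  · rw [restrict_comp, restrict_neg]

theorem SE.contraction {L : Set (E → SignType)} (hSE : SE L) (A : Set E) :
    SE (contraction L A) := by
  rintro _ ⟨X, hX, hXA, rfl⟩ _ ⟨Y, hY, hYA, rfl⟩ e hsep hne
  obtain ⟨Z, hZ, hZe, hZ_agree⟩ := hSE X hX Y hY e hsep hne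
  refine ⟨restrict Z, ⟨Z, hZ, fun a ha => ?_, rfl⟩, hZe, fun f hf => hZ_agree f hf⟩
  rw [hZ_agree a (by simp [hXA a ha])]
  exact comp_apply_of_eq_zero (hXA a ha) (hYA a ha)

theorem contraction_isCOM_general (L : Set (E → SignType)) (hFS : FS L) (hSE : SE L)
    (A : Set E) :
    FS {Y : ↥Aᶜ → SignType | ∃ X ∈ L, (∀ a ∈ A, X a = 0) ∧ Y = restrict X} ∧
    SE {Y : ↥Aᶜ → SignType | ∃ X ∈ L, (∀ a ∈ A, X a = 0) ∧ Y = restrict X} :=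
  ⟨hFS.contraction A, hSE.contraction A⟩

theorem contraction_isCOM [Fintype E] (L : Set (E → SignType)) (hFS : FS L) (hSE : SE L)
    (A : Set E) :
    FS {Y : ↥Aᶜ → SignType | ∃ X ∈ L, (∀ a ∈ A, X a = 0) ∧ Y = restrict X} ∧
    SE {Y : ↥Aᶜ → SignType | ∃ X ∈ L, (∀ a ∈ A, X a = 0) ∧ Y = restrict X} :=
  contraction_isCOM_general L hFS hSE A
end

section
/- Generalization of Mandel's theorem: for a conditional oriented matroid (E, L) with tope set T, one has L = {X ∈ {-1,0,1}^E : ∀ T ∈ T, X ∘ (−T) ∈ T}. In particular, a conditional oriented matroid is completely determined by its set of topes. -/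
variable {E : Type*}

/-! For `⊆`: by (FS), `X ∘ (-T) ∈ L`, and an element of `L` whose support contains that of a tope
is itself a tope.

For `⊇`, let `X ∘ (-T) ∈ L` for every tope `T`; we argue by downward induction on `supp X`. Take
`V ∈ L` with `X ⪯ V` and `supp V` minimal. If `V ≠ X`, then `X' = X ∘ (-V)` has strictly larger
support and inherits the hypothesis, because `X' ∘ (-T) = X ∘ -(V ∘ T)` and `V ∘ T` is a tope; so
`X' ∈ L`. Strong elimination between `V` and `X'` at a point of `supp V \ supp X` gives `Z ∈ L`
with `X ⪯ Z` and `supp Z ⊊ supp V`, contradicting minimality. -/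

open Set
open Function (support mem_support notMem_support)

section SignVectors

variable {X Y : E → SignType}

lemma comp_assoc (X Y Z : E → SignType) : comp (comp X Y) Z = comp X (comp Y Z) := by
  funext e
  by_cases hX : X e = 0 <;> by_cases hY : Y e = 0 <;> simp [comp, hX, hY]

lemma neg_comp (X Y : E → SignType) : -comp X Y = comp (-X) (-Y) := by
  funext e
  by_cases h : X e = 0 <;> simp [comp, h]

lemma support_signType_neg (X : E → SignType) : support (-X) = support X := by
  ext e
  simp

lemma support_comp (X Y : E → SignType) : support (comp X Y) = support X ∪ support Y := by
  ext e
  by_cases h : X e = 0 <;> simp [comp, h]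

lemma sle_comp (X Y : E → SignType) : sle X (comp X Y) := fun e => by
  by_cases h : X e = 0 <;> simp [comp, h]

lemma sle.support_subset (h : sle X Y) : support X ⊆ support Y := fun e he => by
  rcases h e with h0 | h
  · exact absurd h0 he
  · rwa [mem_support, ← h]

lemma sle.eq_of_support_subset (h : sle X Y) (hYX : support Y ⊆ support X) : Y = X := by
  funext e
  rcases h e with h0 | h
  · rw [h0]
    exact notMem_support.mp fun he => hYX he h0
  · exact h.symm

end SignVectors

section Covectors

variable {L : Set (E → SignType)} {X V T Z : E → SignType}

lemma comp_mem (hFS : FS L) (hX : X ∈ L) (hY : Z ∈ L) : comp X Z ∈ L := by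
  have h : comp X (-comp X (-Z)) = comp X Z := by
    funext e
    by_cases h : X e = 0 <;> simp [comp, h]
  simpa only [h] using hFS X hX _ (hFS X hX Z hY)

lemma IsTope.support_subset (hFS : FS L) (hT : IsTope L T) (hZ : Z ∈ L) :
    support Z ⊆ support T := by
  have h : comp T Z = T := hT.2 _ (comp_mem hFS hT.1 hZ) (sle_comp T Z)
  calc support Z ⊆ support (comp T Z) := by rw [support_comp]; exact subset_union_right
    _ = support T := by rw [h]

lemma IsTope.of_support_subset (hFS : FS L) (hT : IsTope L T) (hZ : Z ∈ L)
    (h : support T ⊆ support Z) : IsTope L Z :=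
  ⟨hZ, fun _ hW hZW => hZW.eq_of_support_subset ((hT.support_subset hFS hW).trans h)⟩

lemma IsTope.comp_left (hFS : FS L) (hT : IsTope L T) (hX : X ∈ L) : IsTope L (comp X T) :=
  hT.of_support_subset hFS (comp_mem hFS hX hT.1) (by rw [support_comp]; exact subset_union_right)

lemma IsTope.comp_neg_left (hFS : FS L) (hT : IsTope L T) (hX : X ∈ L) :
    IsTope L (comp X (-T)) :=
  hT.of_support_subset hFS (hFS X hX T hT.1)
    (by rw [support_comp, support_signType_neg]; exact subset_union_right)

lemma exists_isTope [Finite E] (hne : L.Nonempty) : ∃ T, IsTope L T := by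
  obtain ⟨T, hT, hmax⟩ := L.toFinite.exists_maximalFor support L hne
  exact ⟨T, hT, fun Z hZ hTZ => hTZ.eq_of_support_subset (hmax hZ hTZ.support_subset)⟩

lemma SE.exists_sle_support_ssubset (hSE : SE L) (hV : V ∈ L) (hXV : sle X V) (hVX : V ≠ X)
    (hX' : comp X (-V) ∈ L) : ∃ Z ∈ L, sle X Z ∧ support Z ⊂ support V := by
  obtain ⟨e, he⟩ := Function.ne_iff.mp hVX
  have hXe : X e = 0 := (hXV e).resolve_right (Ne.symm he)
  have hVe : V e ≠ 0 := by rwa [hXe] at he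
  -- V and X ∘ (-V) are separated exactly on supp V \ supp X, and V ∘ (X ∘ (-V)) = V.
  obtain ⟨Z, hZ, hZe, hZf⟩ := hSE V hV _ hX' e (by simp [comp, hXe]) hVe
  have hZV : ∀ f, X f ≠ 0 ∨ V f = 0 → Z f = V f := by
    rintro f (hXf | hVf)
    · have hXVf : X f = V f := (hXV f).resolve_left hXf
      have hVf' : V f ≠ 0 := hXVf ▸ hXf
      rw [hZf f, comp, if_neg hVf']
      rw [comp, if_neg hXf, hXVf, SignType.self_eq_neg_iff]
      exact fun h => h.2 h.1
    · have hXf : X f = 0 := notMem_support.mp fun hXf => hXV.support_subset hXf hVf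
      rw [hZf f fun h => h.2 hVf, comp, if_pos hVf, comp, if_pos hXf, Pi.neg_apply, hVf, neg_zero]
  refine ⟨Z, hZ, fun f => ?_, ?_⟩
  · by_cases h : X f = 0
    · exact Or.inl h
    · exact Or.inr ((hZV f (Or.inl h)).trans ((hXV f).resolve_left h).symm).symm
  · refine ssubset_of_subset_not_subset (fun f hf => ?_) fun h => h hVe hZe
    by_contra hVf
    exact hf ((hZV f (Or.inr (notMem_support.mp hVf))).trans (notMem_support.mp hVf))

theorem mem_of_forall_comp_neg_mem [Finite E] (hne : L.Nonempty) (hFS : FS L) (hSE : SE L)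
    (X : E → SignType) (hX : ∀ T, IsTope L T → comp X (-T) ∈ L) : X ∈ L := by
  induction hs : support X using WellFoundedGT.induction generalizing X with
  | _ S ih =>
    subst hs
    obtain ⟨T₀, hT₀⟩ := exists_isTope hne
    obtain ⟨V, ⟨hV, hXV⟩, hVmin⟩ :=
      (L ∩ {W | sle X W}).toFinite.exists_minimalFor support _ ⟨_, hX T₀ hT₀, sle_comp X _⟩
    by_cases hVX : V = X
    · exact hVX ▸ hV
    have hX' : comp X (-V) ∈ L := by
      refine ih _ ?_ _ (fun T hT => ?_) rfl
      · rw [support_comp, support_signType_neg]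
        exact ssubset_of_subset_not_subset subset_union_left fun h =>
          hVX (hXV.eq_of_support_subset (subset_union_right.trans h))
      · rw [comp_assoc, ← neg_comp]
        exact hX _ (hT.comp_left hFS hV)
    obtain ⟨Z, hZ, hXZ, hZV⟩ := hSE.exists_sle_support_ssubset hV hXV hVX hX'
    exact absurd (hVmin ⟨hZ, hXZ⟩ hZV.subset) hZV.not_subset

end Covectors

theorem mandel_generalization [Fintype E] (L : Set (E → SignType))
    (hne : L.Nonempty) (hFS : FS L) (hSE : SE L) :
    L = {X : E → SignType | ∀ T, IsTope L T → IsTope L (comp X (-T))} := by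
  ext X
  exact ⟨fun hX T hT => hT.comp_neg_left hFS hX,
    fun hX => mem_of_forall_comp_neg_mem hne hFS hSE X fun T hT => (hX T hT).1⟩
end
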